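/- arXiv:2409.06634 — 4 statements merged into one kernel-verified Lean document; each statement's English description precedes it below -/
import Mathlib

section
/- For all natural numbers n, k, l with n > 2^21, k = ⌈log₂ n⌉ and l = ⌈n/k⌉, we have 2.422·l·(log₂ l)² ≤ 2.422·n·log₂ n − 4.336·n·log₂(log₂ n). -/
open Real
set_option maxHeartbeats 1000000

private lemma aux_div_lb (t lg c : ℝ) (hlg : 0 < lg) (h : c * lg ≤ t * lg) : c ≤ t :=
  le_of_mul_le_mul_right (by linarith) hlg

private lemma aux_mul_lb (t lg v : ℝ) (ht : 0 ≤ t) (hlg : 0.6931471803 < lg)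
    (h : t * lg ≤ v) : 0.6931471803 * t ≤ v := by nlinarith

private lemma aux_LN (L s : ℝ) (h : 0.6931471803 * L ≤ 2 * s - 2) (hs : 1448 ≤ s) :
    L ≤ 0.002 * (s * s) := by nlinarith [sq_nonneg (s - 1448)]

private lemma aux_xyL (x y s : ℝ) (h : 0.6931471803 * x ≤ 2 * s - 2)
    (hy : y ≤ x + 1) (hs : 4.58 ≤ s) : x + y ≤ 1.79 * (s * s) := by
  nlinarith [sq_nonneg (s - 1.62)]

private lemma aux_log1p (u lg v : ℝ) (hu : 0 ≤ u) (hlg : 0.6931471803 < lg)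
    (h : v ≤ u) : v ≤ 1.45 * u * lg := by nlinarith

private lemma aux_s2a (KN L y : ℝ) (h0 : 0 ≤ KN) (h1 : KN ≤ 1) (hy : 4 ≤ y) :
    (L - y + 1.45 * KN) ^ 2 ≤ (L - y) ^ 2 + 2.9 * KN * L := by
  nlinarith [mul_nonneg h0 (by linarith : (0:ℝ) ≤ 2 * y - 1.45 * KN)]

private lemma aux_m2 (KN L : ℝ) (h0 : 0 ≤ KN) (h1 : KN ≤ 1) (hL : 0 ≤ L) :
    2.9 * KN * L ≤ 2.9 * L := by nlinarith [mul_nonneg h0 hL]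

private lemma aux_m3 (L y : ℝ) (h0 : 0 ≤ y) (h1 : y ≤ L) : (L - y) ^ 2 ≤ L ^ 2 := by
  nlinarith [mul_nonneg h0 (by linarith : (0:ℝ) ≤ 2 * L - y)]

private lemma aux_t1 (x y L : ℝ) (hxy : x ≤ y) (hxyL : x + y ≤ 1.79 * L) :
    y ^ 2 - x ^ 2 ≤ 1.79 * (y - x) * L := by
  nlinarith [mul_nonneg (by linarith : (0:ℝ) ≤ y - x) (by linarith : (0:ℝ) ≤ 1.79 * L - x - y)]

private lemma aux_xup (x L lg : ℝ) (hlg1 : 0.6931471803 < lg) (hlg2 : lg < 0.6931471808)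
    (hL : 21 ≤ L) (h : x * lg ≤ 123 / 28 * lg + (L / 21 - 1)) :
    x ≤ 123 / 28 + (L - 21) * (6871 / 100000) := by
  nlinarith [mul_nonneg (by linarith : (0:ℝ) ≤ L - 21) (by linarith : (0:ℝ) ≤ lg - 0.6931471803)]

private lemma aux_case1 (x L : ℝ) (h1 : 21 ≤ L) (h2 : L ≤ 25) (h3 : 224 / 51 ≤ x)
    (h4 : x ≤ 123 / 28 + (L - 21) * (6871 / 100000)) :
    2.422 * x ^ 2 + 0.0022 * L ≤ 0.508 * (x * L) := by
  nlinarith [mul_nonneg (by linarith : (0:ℝ) ≤ x - 224 / 51)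
      (by linarith : (0:ℝ) ≤ 123 / 28 + (L - 21) * (6871 / 100000) - x),
    mul_nonneg (by linarith : (0:ℝ) ≤ x - 224 / 51) (by linarith : (0:ℝ) ≤ L - 21),
    mul_nonneg (by linarith : (0:ℝ) ≤ 123 / 28 + (L - 21) * (6871 / 100000) - x)
      (by linarith : (0:ℝ) ≤ L - 21),
    mul_nonneg (by linarith : (0:ℝ) ≤ L - 21) (by linarith : (0:ℝ) ≤ 25 - L)]

private lemma aux_case1err (L N : ℝ) (h1 : 21 ≤ L) (h2 : L ≤ 25) (hN : 2097153 ≤ N) :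
    2.422 * (5.8 * L + L ^ 2) ≤ 0.0022 * N := by
  nlinarith [mul_nonneg (by linarith : (0:ℝ) ≤ 25 - L) (by linarith : (0:ℝ) ≤ L)]

private lemma aux_x19 (x L lg : ℝ) (hlg1 : 0.6931471803 < lg) (hlg2 : lg < 0.6931471808)
    (hL : 25 ≤ L) (h : x * lg ≤ 5 * lg + (L / 32 - 1)) : x ≤ 0.19 * L := by
  nlinarith [mul_pos (by linarith : (0:ℝ) < lg) (by linarith : (0:ℝ) < lg),
    mul_nonneg (by linarith : (0:ℝ) ≤ L - 25) (by linarith : (0:ℝ) ≤ lg - 0.6931471803)]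

private lemma aux_L2N (L q s N : ℝ) (hL0 : 0 ≤ L) (h : 0.6931471803 * L ≤ 4 * q - 4)
    (hq : q * q = s) (hq1 : 1 ≤ q) (hsN : 5792 * s ≤ N) : L ^ 2 ≤ 0.00575 * N := by
  nlinarith [mul_self_le_mul_self (by linarith : (0:ℝ) ≤ 0.6931471803 * L) h]

private lemma aux_d1 (x L N : ℝ) (h : x ≤ 0.19 * L) (hx0 : 0 ≤ x) (hN : 0 ≤ N) :
    N * x ^ 2 ≤ 0.19 * (N * x) * L := by
  nlinarith [mul_nonneg (mul_nonneg hN hx0) (by linarith : (0:ℝ) ≤ 0.19 * L - x)]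

private lemma aux_d2 (x L N : ℝ) (hx4 : 4 ≤ x) (hL : 25 ≤ L) (hN0 : 0 ≤ N)
    (hL2 : L ^ 2 ≤ 0.00575 * N) : 2.422 * (5.8 * L + L ^ 2) ≤ 0.04782 * (N * x) := by
  nlinarith [mul_nonneg (by linarith : (0:ℝ) ≤ L - 25) (by linarith : (0:ℝ) ≤ L),
    mul_nonneg hN0 (by linarith : (0:ℝ) ≤ x - 4)]

theorem stmt_11 (n k l : ℕ) (hn : 2 ^ 21 < n) (hk : k = ⌈Real.logb 2 n⌉₊)
    (hl : l = ⌈(n : ℝ) / (k : ℝ)⌉₊) :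
    2.422 * l * (Real.logb 2 l) ^ 2 ≤
      2.422 * n * Real.logb 2 n - 4.336 * n * Real.logb 2 (Real.logb 2 n) := by
  have hl2a := Real.log_two_gt_d9
  have hl2b := Real.log_two_lt_d9
  have hl2pos : (0:ℝ) < Real.log 2 := by linarith
  set N : ℝ := (n:ℝ) with hN
  have hNn : (2097153:ℝ) ≤ N := by
    have h : 2097153 ≤ n := hn
    rw [hN]; exact_mod_cast h
  have hNpos : (0:ℝ) < N := by linarith
  set L : ℝ := Real.logb 2 N with hLdef
  have hL21 : (21:ℝ) < L := by
    rw [hLdef, Real.lt_logb_iff_rpow_lt one_lt_two hNpos,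
      show ((21:ℝ)) = ((21:ℕ):ℝ) by norm_num, Real.rpow_natCast]
    norm_num; linarith
  have hLpos : (0:ℝ) < L := by linarith
  have hLlog : L * Real.log 2 = Real.log N := by
    rw [hLdef, Real.logb, div_mul_cancel₀ _ (ne_of_gt hl2pos)]
  -- sqrt facts for N
  set sN : ℝ := Real.sqrt N with hsNdef
  have hsN_sq : sN * sN = N := Real.mul_self_sqrt (le_of_lt hNpos)
  have hsN_ge : (1448:ℝ) ≤ sN := by
    rw [hsNdef, show (1448:ℝ) = Real.sqrt (1448 ^ 2) by rw [Real.sqrt_sq]; norm_num]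
    apply Real.sqrt_le_sqrt; norm_num; linarith
  have hsN_pos : (0:ℝ) < sN := by linarith
  have hlogN_le : Real.log N ≤ 2 * sN - 2 := by
    have h1 : Real.log N = Real.log sN + Real.log sN := by
      rw [← Real.log_mul (ne_of_gt hsN_pos) (ne_of_gt hsN_pos), hsN_sq]
    have h2 : Real.log sN ≤ sN - 1 := Real.log_le_sub_one_of_pos hsN_pos
    linarith
  have hLN : L ≤ 0.002 * N := by
    have h1 : 0.6931471803 * L ≤ 2 * sN - 2 :=
      aux_mul_lb L (Real.log 2) _ (by linarith) hl2a (by linarith [hLlog, hlogN_le])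
    have := aux_LN L sN h1 hsN_ge
    rw [hsN_sq] at this; exact this
  -- k facts
  set K : ℝ := (k:ℝ) with hKdef
  have hLK : L ≤ K := by
    have h := Nat.le_ceil L
    rw [← hk] at h; exact_mod_cast h
  have hK22 : (22:ℝ) ≤ K := by
    have h : 21 < k := by rw [hk]; exact Nat.lt_ceil.mpr (by exact_mod_cast hL21)
    have h2 : 22 ≤ k := h
    rw [hKdef]; exact_mod_cast h2
  have hKpos : (0:ℝ) < K := by linarith
  have hKL1 : K < L + 1 := by
    have h := Nat.ceil_lt_add_one (show (0:ℝ) ≤ L by linarith)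
    rw [← hk] at h; exact_mod_cast h
  have hKN : K ≤ N := by linarith
  -- x, y
  set x : ℝ := Real.logb 2 L with hxdef
  set y : ℝ := Real.logb 2 K with hydef
  have hx4 : (4:ℝ) ≤ x := by
    rw [hxdef, Real.le_logb_iff_rpow_le one_lt_two hLpos,
      show ((4:ℝ)) = ((4:ℕ):ℝ) by norm_num, Real.rpow_natCast]
    norm_num; linarith
  have hxy : x ≤ y := Real.logb_le_logb_of_le one_lt_two hLpos hLK
  have hyL : y ≤ L := by
    rw [hydef, hLdef]; exact Real.logb_le_logb_of_le one_lt_two hKpos hKN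
  have hxlog : x * Real.log 2 = Real.log L := by
    rw [hxdef, Real.logb, div_mul_cancel₀ _ (ne_of_gt hl2pos)]
  have hy1 : y ≤ x + 1 := by
    have h1 : y ≤ Real.logb 2 (2 * L) :=
      Real.logb_le_logb_of_le one_lt_two hKpos (by linarith)
    have h2 : Real.logb 2 (2 * L) = 1 + x := by
      rw [Real.logb_mul (by norm_num) (ne_of_gt hLpos), Real.logb_self_eq_one one_lt_two]
    linarith
  -- sqrt facts for L
  have hsL_sq : Real.sqrt L * Real.sqrt L = L := Real.mul_self_sqrt (le_of_lt hLpos)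
  have hsL_ge : (4.58:ℝ) ≤ Real.sqrt L := by
    rw [show (4.58:ℝ) = Real.sqrt (4.58 ^ 2) by rw [Real.sqrt_sq]; norm_num]
    apply Real.sqrt_le_sqrt; norm_num; linarith
  have hlogL_le : Real.log L ≤ 2 * Real.sqrt L - 2 := by
    have h1 : Real.log L = Real.log (Real.sqrt L) + Real.log (Real.sqrt L) := by
      rw [← Real.log_mul (by positivity) (by positivity), hsL_sq]
    have h2 : Real.log (Real.sqrt L) ≤ Real.sqrt L - 1 :=
      Real.log_le_sub_one_of_pos (by positivity)
    linarith
  have hx0 : (0:ℝ) ≤ x := by linarith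
  have hxs : 0.6931471803 * x ≤ 2 * Real.sqrt L - 2 :=
    aux_mul_lb x (Real.log 2) _ hx0 hl2a (by linarith [hxlog, hlogL_le])
  have hxyL : x + y ≤ 1.79 * L := by
    have := aux_xyL x y (Real.sqrt L) hxs hy1 hsL_ge
    rw [hsL_sq] at this; exact this
  -- l facts
  have hlr1 : (1:ℝ) ≤ (l:ℝ) := by
    have h : 0 < l := by rw [hl]; exact Nat.ceil_pos.mpr (by positivity)
    exact_mod_cast h
  have hlrK : (l:ℝ) ≤ N / K + 1 := by
    have h := Nat.ceil_lt_add_one (show (0:ℝ) ≤ N / K by positivity)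
    rw [← hl] at h; exact le_of_lt h
  set xl : ℝ := Real.logb 2 (l:ℝ) with hxldef
  have hxl0 : 0 ≤ xl := Real.logb_nonneg one_lt_two hlr1
  -- bound on xl
  have hKN1 : K / N ≤ 1 := by rw [div_le_one hNpos]; exact hKN
  have hKN0 : 0 ≤ K / N := by positivity
  have hxlA : xl ≤ L - y + 1.45 * (K / N) := by
    have h1 : xl ≤ Real.logb 2 (N / K + 1) :=
      Real.logb_le_logb_of_le one_lt_two (by linarith) hlrK
    have h2 : (N / K + 1 : ℝ) = (N + K) / K := by field_simp
    have h3 : (N + K : ℝ) = N * (1 + K / N) := by field_simp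
    have h4 : Real.logb 2 (N / K + 1) = L + Real.logb 2 (1 + K / N) - y := by
      rw [h2, Real.logb_div (by positivity) (ne_of_gt hKpos), h3,
        Real.logb_mul (ne_of_gt hNpos) (by positivity), hLdef]
    have h5 : Real.logb 2 (1 + K / N) ≤ 1.45 * (K / N) := by
      rw [Real.logb, div_le_iff₀ hl2pos]
      have h6 : Real.log (1 + K / N) ≤ K / N := by
        have := Real.log_le_sub_one_of_pos (show (0:ℝ) < 1 + K / N by positivity)
        linarith
      exact aux_log1p (K / N) (Real.log 2) _ hKN0 hl2a h6
    linarith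
  set A : ℝ := L - y + 1.45 * (K / N) with hAdef
  have hA0 : 0 ≤ A := by rw [hAdef]; linarith [hyL, hKN0]
  -- step 1
  have step1 : 2.422 * l * xl ^ 2 ≤ 2.422 * ((N / K + 1) * A ^ 2) := by
    have e1 : xl ^ 2 ≤ A ^ 2 := pow_le_pow_left₀ hxl0 hxlA 2
    have e2 : (l:ℝ) * xl ^ 2 ≤ (N / K + 1) * A ^ 2 :=
      mul_le_mul hlrK e1 (by positivity) (by positivity)
    linarith
  -- step 2
  have hy4 : (4:ℝ) ≤ y := le_trans hx4 hxy
  have s2a : A ^ 2 ≤ (L - y) ^ 2 + 2.9 * (K / N) * L := by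
    rw [hAdef]; exact aux_s2a (K / N) L y hKN0 hKN1 hy4
  have s2b : (N / K + 1) * ((L - y) ^ 2 + 2.9 * (K / N) * L) =
      N * (L - y) ^ 2 / K + (L - y) ^ 2 + 2.9 * L + 2.9 * (K / N) * L := by
    field_simp; ring
  have s2c : N * (L - y) ^ 2 / K ≤ N * (L - y) ^ 2 / L :=
    div_le_div_of_nonneg_left (by positivity) hLpos hLK
  have s2d : N * (L - y) ^ 2 / L = N * L - 2 * (N * y) + N * y ^ 2 / L := by
    field_simp; ring
  have s2e : N * y ^ 2 / L ≤ N * x ^ 2 / L + 1.79 * (N * (y - x)) := by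
    have t1 : (y ^ 2 - x ^ 2) / L ≤ 1.79 * (y - x) := by
      rw [div_le_iff₀ hLpos]; exact aux_t1 x y L hxy hxyL
    have t2 : N * ((y ^ 2 - x ^ 2) / L) ≤ N * (1.79 * (y - x)) :=
      mul_le_mul_of_nonneg_left t1 (le_of_lt hNpos)
    have t3 : N * ((y ^ 2 - x ^ 2) / L) = N * y ^ 2 / L - N * x ^ 2 / L := by
      field_simp
    rw [t3] at t2; linarith
  have m2 : 2.9 * (K / N) * L ≤ 2.9 * L := aux_m2 (K / N) L hKN0 hKN1 (le_of_lt hLpos)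
  have m3 : (L - y) ^ 2 ≤ L ^ 2 := aux_m3 L y (by linarith) hyL
  have step2 : (N / K + 1) * A ^ 2 ≤
      N * L - 2 * (N * y) + N * x ^ 2 / L + 1.79 * (N * (y - x)) + 5.8 * L + L ^ 2 := by
    have m1 : (N / K + 1) * A ^ 2 ≤ (N / K + 1) * ((L - y) ^ 2 + 2.9 * (K / N) * L) :=
      mul_le_mul_of_nonneg_left s2a (by positivity)
    rw [s2b] at m1
    linarith [m1, s2c, s2d, s2e, m2, m3]
  -- step 3
  have step3 : 2.422 * (N * x ^ 2 / L) + 2.422 * (5.8 * L + L ^ 2) ≤ 0.508 * (N * x) := by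
    rcases le_or_gt L 25 with hL25 | hL25
    · -- case 1
      have p1 : (2:ℝ) ^ (224:ℕ) ≤ 21 ^ (51:ℕ) := by norm_num
      have p2 : (21:ℝ) ^ (28:ℕ) ≤ 2 ^ (123:ℕ) := by norm_num
      have q1 : Real.log ((2:ℝ) ^ (224:ℕ)) ≤ Real.log ((21:ℝ) ^ (51:ℕ)) :=
        Real.log_le_log (by positivity) p1
      have q2 : Real.log ((21:ℝ) ^ (28:ℕ)) ≤ Real.log ((2:ℝ) ^ (123:ℕ)) :=
        Real.log_le_log (by positivity) p2
      rw [Real.log_pow, Real.log_pow] at q1 q2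
      push_cast at q1 q2
      have hlogL_ge : Real.log 21 ≤ Real.log L :=
        Real.log_le_log (by norm_num) (by linarith)
      have hx_lo : 224 / 51 ≤ x := by
        apply aux_div_lb x (Real.log 2) _ hl2pos
        rw [hxlog]; linarith [q1, hlogL_ge]
      have htang : Real.log L ≤ Real.log 21 + (L / 21 - 1) := by
        have e1 : Real.log (L / 21) = Real.log L - Real.log 21 :=
          Real.log_div (ne_of_gt hLpos) (by norm_num)
        have e2 : Real.log (L / 21) ≤ L / 21 - 1 :=
          Real.log_le_sub_one_of_pos (by positivity)
        linarith
      have hx_up : x ≤ 123 / 28 + (L - 21) * (6871 / 100000) := by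
        apply aux_xup x L (Real.log 2) hl2a hl2b (by linarith)
        rw [hxlog]; linarith [htang, q2]
      have c1 : 2.422 * x ^ 2 + 0.0022 * L ≤ 0.508 * (x * L) :=
        aux_case1 x L (by linarith) hL25 hx_lo hx_up
      have c2 : 2.422 * (5.8 * L + L ^ 2) ≤ 0.0022 * N :=
        aux_case1err L N (by linarith) hL25 hNn
      have c3 : N / L * (2.422 * x ^ 2 + 0.0022 * L) ≤ N / L * (0.508 * (x * L)) :=
        mul_le_mul_of_nonneg_left c1 (by positivity)
      have c4 : N / L * (2.422 * x ^ 2 + 0.0022 * L) = 2.422 * (N * x ^ 2 / L) + 0.0022 * N := by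
        field_simp
      have c5 : N / L * (0.508 * (x * L)) = 0.508 * (N * x) := by
        field_simp
      rw [c4, c5] at c3
      linarith
    · -- case 2
      have hN25 : (33554432:ℝ) ≤ N := by
        have h25 : (25:ℝ) ≤ L := le_of_lt hL25
        rw [hLdef, Real.le_logb_iff_rpow_le one_lt_two hNpos,
          show ((25:ℝ)) = ((25:ℕ):ℝ) by norm_num, Real.rpow_natCast] at h25
        norm_num at h25; linarith
      have hsN5792 : (5792:ℝ) ≤ sN := by
        rw [hsNdef, show (5792:ℝ) = Real.sqrt (5792 ^ 2) by rw [Real.sqrt_sq]; norm_num]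
        apply Real.sqrt_le_sqrt; norm_num; linarith
      have hsN_le : 5792 * sN ≤ N := by
        have h := mul_le_mul_of_nonneg_right hsN5792 (le_of_lt hsN_pos)
        rw [hsN_sq] at h; exact h
      set qN : ℝ := Real.sqrt sN with hqNdef
      have hqN_sq : qN * qN = sN := Real.mul_self_sqrt (le_of_lt hsN_pos)
      have hqN1 : (1:ℝ) ≤ qN := by
        rw [hqNdef, show (1:ℝ) = Real.sqrt (1 ^ 2) by rw [Real.sqrt_sq]; norm_num]
        apply Real.sqrt_le_sqrt; norm_num; linarith
      have hqN_pos : (0:ℝ) < qN := by linarith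
      have hlogsN : Real.log sN = Real.log qN + Real.log qN := by
        rw [← Real.log_mul (ne_of_gt hqN_pos) (ne_of_gt hqN_pos), hqN_sq]
      have hlogN4 : Real.log N ≤ 4 * qN - 4 := by
        have h1 : Real.log N = Real.log sN + Real.log sN := by
          rw [← Real.log_mul (ne_of_gt hsN_pos) (ne_of_gt hsN_pos), hsN_sq]
        have h2 : Real.log qN ≤ qN - 1 := Real.log_le_sub_one_of_pos hqN_pos
        linarith
      have hL2N : L ^ 2 ≤ 0.00575 * N := by
        apply aux_L2N L qN sN N (by linarith)
          (aux_mul_lb L (Real.log 2) _ (by linarith) hl2a (by linarith [hLlog])) hqN_sq hqN1 hsN_le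
      have hlog32 : Real.log (32:ℝ) = 5 * Real.log 2 := by
        rw [show (32:ℝ) = 2 ^ (5:ℕ) by norm_num, Real.log_pow]; push_cast; ring
      have htang32 : Real.log L ≤ 5 * Real.log 2 + (L / 32 - 1) := by
        have e1 : Real.log (L / 32) = Real.log L - Real.log 32 :=
          Real.log_div (ne_of_gt hLpos) (by norm_num)
        have e2 : Real.log (L / 32) ≤ L / 32 - 1 :=
          Real.log_le_sub_one_of_pos (by positivity)
        rw [hlog32] at e1; linarith
      have hx19 : x ≤ 0.19 * L := by
        apply aux_x19 x L (Real.log 2) hl2a hl2b (le_of_lt hL25)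
        rw [hxlog]; linarith
      have d1 : N * x ^ 2 / L ≤ 0.19 * (N * x) := by
        rw [div_le_iff₀ hLpos]
        exact aux_d1 x L N hx19 hx0 (le_of_lt hNpos)
      have d2 : 2.422 * (5.8 * L + L ^ 2) ≤ 0.04782 * (N * x) :=
        aux_d2 x L N hx4 (le_of_lt hL25) (le_of_lt hNpos) hL2N
      linarith
  -- final assembly
  have F4 : N * x ≤ N * y := mul_le_mul_of_nonneg_left hxy (le_of_lt hNpos)
  have F2' : 2.422 * ((N / K + 1) * A ^ 2) ≤
      2.422 * (N * L - 2 * (N * y) + N * x ^ 2 / L + 1.79 * (N * (y - x)) + 5.8 * L + L ^ 2) :=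
    mul_le_mul_of_nonneg_left step2 (by norm_num)
  have goal2 : 2.422 * ((N / K + 1) * A ^ 2) ≤ 2.422 * N * L - 4.336 * (N * x) := by
    linarith [F2', step3, F4]
  calc 2.422 * l * xl ^ 2 ≤ 2.422 * ((N / K + 1) * A ^ 2) := step1
    _ ≤ 2.422 * N * L - 4.336 * (N * x) := goal2
    _ = 2.422 * N * L - 4.336 * N * x := by ring
end

section
/- For all natural numbers n, k, l with n > 2^16, k = ⌈(log₂ n)²⌉ and l = ⌈n/k⌉, we have 2.422·l·(log₂ l)² ≤ 2.432·n. -/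
theorem stmt_14 (n k l : ℕ) (hn : 2 ^ 16 < n) (hk : k = ⌈(Real.logb 2 n) ^ 2⌉₊)
    (hl : l = ⌈(n : ℝ) / (k : ℝ)⌉₊) :
    2.422 * l * (Real.logb 2 l) ^ 2 ≤ 2.432 * n := by
  have hb : (1:ℝ) < 2 := one_lt_two
  have hnpos : (0:ℝ) < n := by positivity
  have hn' : (65536:ℝ) < n := by
    have h : 65536 < n := by omega
    exact_mod_cast h
  set L := Real.logb 2 n with hLdef
  have hL16 : (16:ℝ) ≤ L := by
    rw [hLdef, Real.le_logb_iff_rpow_le hb hnpos]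
    have : (2:ℝ) ^ (16:ℝ) = 65536 := by
      rw [show (16:ℝ) = ((16:ℕ):ℝ) by norm_num, Real.rpow_natCast]; norm_num
    rw [this]; linarith
  have hLn : (2:ℝ) ^ L = n := Real.rpow_logb (by norm_num) (by norm_num) hnpos
  -- key analytic fact: 242.2 * L^2 ≤ n
  have hkey : 242.2 * L ^ 2 ≤ (n:ℝ) := by
    rw [← hLn]
    have ht : 0 ≤ L - 16 := by linarith
    have h16 : (2:ℝ) ^ (16:ℝ) = 65536 := by
      rw [show (16:ℝ) = ((16:ℕ):ℝ) by norm_num, Real.rpow_natCast]; norm_num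
    have hsplit : (2:ℝ) ^ L = 65536 * (2:ℝ) ^ (L - 16) := by
      have h : (2:ℝ) ^ (16:ℝ) * (2:ℝ) ^ (L - 16) = (2:ℝ) ^ L := by
        rw [← Real.rpow_add (by norm_num : (0:ℝ) < 2)]; ring_nf
      rw [← h, h16]
    have hexp : (1 + (L - 16) * (Real.log 2 / 2)) ^ 2 ≤ (2:ℝ) ^ (L - 16) := by
      have h1 : (L - 16) * (Real.log 2 / 2) + 1 ≤ Real.exp ((L - 16) * (Real.log 2 / 2)) :=
        Real.add_one_le_exp _
      have h0 : 0 ≤ 1 + (L - 16) * (Real.log 2 / 2) := by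
        have := Real.log_pos hb
        positivity
      have h2 : (1 + (L - 16) * (Real.log 2 / 2)) ^ 2 ≤
          (Real.exp ((L - 16) * (Real.log 2 / 2))) ^ 2 := by
        apply pow_le_pow_left₀ h0 (by linarith)
      calc (1 + (L - 16) * (Real.log 2 / 2)) ^ 2
          ≤ (Real.exp ((L - 16) * (Real.log 2 / 2))) ^ 2 := h2
        _ = Real.exp ((L - 16) * Real.log 2) := by
            rw [← Real.exp_nat_mul]; ring_nf
        _ = (2:ℝ) ^ (L - 16) := by
            rw [Real.rpow_def_of_pos (by norm_num), mul_comm]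
    have hlog2 : (0.6931:ℝ) ≤ Real.log 2 := by
      have := Real.log_two_gt_d9; linarith
    rw [hsplit]
    nlinarith [sq_nonneg (L - 16), mul_nonneg ht ht, sq_nonneg (L-16), ht,
      mul_nonneg (mul_nonneg ht ht) (sub_nonneg.2 hlog2),
      mul_nonneg ht (sub_nonneg.2 hlog2)]
  -- k bounds
  have hkL : L ^ 2 ≤ (k:ℝ) := hk ▸ Nat.le_ceil _
  have hkpos : (0:ℝ) < k := by nlinarith
  -- l bounds
  have hlk : (l:ℝ) * k ≤ (n:ℝ) + k := by
    have h1 : (l:ℝ) < (n:ℝ)/(k:ℝ) + 1 := by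
      rw [hl]; exact Nat.ceil_lt_add_one (by positivity)
    have := mul_le_mul_of_nonneg_right h1.le hkpos.le
    rw [add_mul, div_mul_cancel₀ _ hkpos.ne', one_mul] at this
    linarith
  have hln : (l:ℝ) ≤ n := by
    have : l ≤ n := by
      rw [hl, Nat.ceil_le]
      rw [div_le_iff₀ hkpos]
      have hk1 : (1:ℝ) ≤ k := by nlinarith
      nlinarith
    exact_mod_cast this
  have hl1 : (1:ℝ) ≤ l ∨ l = 0 := by
    rcases Nat.eq_zero_or_pos l with h | h
    · right; exact h
    · left; exact_mod_cast h
  rcases hl1 with hl1 | hl0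
  · have hlogl0 : 0 ≤ Real.logb 2 l := Real.logb_nonneg hb hl1
    have hloglL : Real.logb 2 l ≤ L := Real.logb_le_logb_of_le hb (by linarith) hln
    have hL0 : 0 ≤ L := by linarith
    have hlpos : (0:ℝ) ≤ l := by linarith
    -- l * (logb 2 l)^2 ≤ l * L^2 ≤ ((n+k)/k) * L^2 ≤ n + L^2
    have step1 : (l:ℝ) * (Real.logb 2 l) ^ 2 ≤ (l:ℝ) * L ^ 2 := by
      apply mul_le_mul_of_nonneg_left _ hlpos
      exact pow_le_pow_left₀ hlogl0 hloglL 2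
    have step2 : (l:ℝ) * L ^ 2 ≤ (n:ℝ) + L ^ 2 := by
      -- l * k ≤ n + k, L^2 ≤ k
      -- l * L^2 * k ≤ (n + k) * L^2 ≤ n*k + k*L^2  (since L^2 ≤ k)
      rw [← mul_le_mul_iff_of_pos_right hkpos]
      calc (l:ℝ) * L ^ 2 * k = ((l:ℝ) * k) * L ^ 2 := by ring
        _ ≤ ((n:ℝ) + k) * L ^ 2 := by
            apply mul_le_mul_of_nonneg_right hlk (by positivity)
        _ = (n:ℝ) * L ^ 2 + k * L ^ 2 := by ring
        _ ≤ (n:ℝ) * k + L ^ 2 * k := by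
            have h1 : (n:ℝ) * L ^ 2 ≤ (n:ℝ) * k :=
              mul_le_mul_of_nonneg_left hkL (by positivity)
            nlinarith
        _ = ((n:ℝ) + L ^ 2) * k := by ring
    nlinarith
  · simp [hl0]
    positivity
end

section
/- Alternating split identity for And-Or paths: let m ≥ 2, let x₀,…,x_{m−1} be Boolean variables and let k be an odd integer with 1 ≤ k < m. Define g*(x₀,…,x_{m−1}) recursively by g*(x₀) = x₀, g*(x₀,x₁) = x₀ ∨ x₁, and g*(x₀,…,x_{m−1}) = x₀ ∨ (x₁ ∧ g*(x₂,…,x_{m−1})) for m ≥ 3. Then g*(x₀,…,x_{m−1}) = g*(x₀,…,x_{k−1}) ∨ ((x₁ ∧ x₃ ∧ ⋯ ∧ x_k) ∧ g*(x_{k+1},…,x_{m−1})), as Boolean functions {0,1}^m → {0,1}. -/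
/-- The And-Or path function `g*` on a list of Boolean inputs:
`aop [x₀] = x₀`, `aop [x₀, x₁] = x₀ ∨ x₁`, and
`aop (x₀ :: x₁ :: rest) = x₀ ∨ (x₁ ∧ aop rest)` for lists of length ≥ 3. -/
def aop : List Bool → Bool
  | [] => true
  | [x] => x
  | x :: y :: rest => x || (y && aop rest)

lemma bool_key (x y a c d : Bool) :
    (x || (y && (a || (c && d)))) = ((x || (y && a)) || ((y && c) && d)) := by
  cases x <;> cases y <;> cases a <;> cases c <;> cases d <;> rfl

lemma aop_split (n : ℕ) : ∀ xs : List Bool, 2 * n + 1 < xs.length →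
    aop xs =
      (aop (xs.take (2 * n + 1)) ||
        (((List.range (n + 1)).all fun j => xs.getD (2 * j + 1) true) &&
          aop (xs.drop (2 * n + 2)))) := by
  induction n with
  | zero =>
    intro xs hxs
    match xs with
    | x :: y :: rest =>
      simp [aop, List.range_succ]
  | succ n ih =>
    intro xs hxs
    match xs with
    | x :: y :: rest =>
      have hr : 2 * n + 1 < rest.length := by
        simp at hxs; omega
      have key := ih rest hr
      have htake : (x :: y :: rest).take (2 * (n + 1) + 1)
          = x :: y :: rest.take (2 * n + 1) := by
        have : 2 * (n + 1) + 1 = (2 * n + 1) + 1 + 1 := by ring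
        rw [this]; rfl
      have hdrop : (x :: y :: rest).drop (2 * (n + 1) + 2)
          = rest.drop (2 * n + 2) := by
        have : 2 * (n + 1) + 2 = (2 * n + 2) + 1 + 1 := by ring
        rw [this]; rfl
      have hall : ((List.range (n + 1 + 1)).all
            fun j => (x :: y :: rest).getD (2 * j + 1) true)
          = (y && ((List.range (n + 1)).all fun j => rest.getD (2 * j + 1) true)) := by
        rw [List.range_succ_eq_map]
        simp only [List.all_cons, List.all_map]
        congr 1
      rw [htake, hdrop, hall]
      show (x || (y && aop rest)) = _
      rw [key]
      show _ = ((x || (y && aop (rest.take (2 * n + 1)))) || _)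
      rw [bool_key]

/-- Alternating split identity for And-Or paths. -/
theorem stmt_18 (m k : ℕ) (hm : 2 ≤ m) (hk1 : 1 ≤ k) (hkm : k < m) (hkodd : Odd k)
    (xs : List Bool) (hlen : xs.length = m) :
    aop xs =
      (aop (xs.take k) ||
        (((List.range ((k + 1) / 2)).all fun j => xs.getD (2 * j + 1) true) &&
          aop (xs.drop (k + 1)))) := by
  obtain ⟨n, rfl⟩ := hkodd
  have h1 : (2 * n + 1 + 1) / 2 = n + 1 := by omega
  rw [h1]
  exact aop_split n xs (by omega)
end

section
/- l-part decomposition of And-Or paths: let n input pairs (p₀,g₀),…,(p_{n−1},g_{n−1}) of Boolean variables be partitioned into l consecutive parts P⁽⁰⁾,…,P⁽ˡ⁻¹⁾, where part P⁽ʲ⁾ contains n_j input pairs. For each part define h*(P⁽ʲ⁾) as the And-Or path function g* on the inputs (g,p) of that part in descending index order, and define a(P⁽ʲ⁾) as the conjunction of all propagate signals p_i in that part. Then g*(g_{n−1},p_{n−1},…,g₁,p₁,g₀) = g*(h*(P⁽ˡ⁻¹⁾), a(P⁽ˡ⁻¹⁾), …, h*(P⁽¹⁾), a(P⁽¹⁾),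 h*(P⁽⁰⁾)) as Boolean functions. -/
/-- The input list `[g (s+m-1), p (s+m-1), …, g (s+1), p (s+1), g s]` of the
And-Or path computing the carry bit of the `m` input pairs starting at index `s`. -/
def carryList (g p : ℕ → Bool) (s : ℕ) : ℕ → List Bool
  | 0 => []
  | 1 => [g s]
  | m + 1 => g (s + m) :: p (s + m) :: carryList g p s m

lemma carryList_succ (g p : ℕ → Bool) (s k : ℕ) (hk : 1 ≤ k) :
    carryList g p s (k + 1) = g (s + k) :: p (s + k) :: carryList g p s k := by
  obtain ⟨t, rfl⟩ : ∃ t, k = t + 1 := ⟨k - 1, (Nat.succ_pred_eq_of_pos hk).symm⟩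
  simp [carryList]

lemma carry_split (g p : ℕ → Bool) (s : ℕ) (hs : 1 ≤ s) :
    ∀ m, 1 ≤ m →
    aop (carryList g p 0 (s + m)) =
      (aop (carryList g p s m) ||
        (((List.range m).all fun i => p (s + i)) && aop (carryList g p 0 s))) := by
  intro m hm
  induction m with
  | zero => omega
  | succ m ih =>
    rcases Nat.eq_or_lt_of_le hm with h | h
    · -- m + 1 = 1
      have hm0 : m = 0 := by omega
      subst hm0
      rw [show s + 1 = s + 1 from rfl, carryList_succ g p 0 s hs]
      simp [carryList, aop, List.range_succ]
    · have hm1 : 1 ≤ m := by omega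
      have h1 : 1 ≤ s + m := by omega
      rw [show s + (m + 1) = (s + m) + 1 from by ring, carryList_succ g p 0 (s + m) (by omega),
        carryList_succ g p s m hm1]
      simp only [Nat.zero_add, aop, ih hm1, List.range_succ, List.all_append, List.all_cons,
        List.all_nil, Bool.and_true]
      cases g (s+m) <;> cases p (s+m) <;> cases aop (carryList g p s m) <;>
        cases (List.range m).all (fun i => p (s+i)) <;> cases aop (carryList g p 0 s) <;> rfl

/-- `l`-part decomposition of And-Or paths:
the carry bit on `n` input pairs, partitioned into `l` consecutive parts of sizes
`sizes 0, …, sizes (l-1)`, equals the And-Or path applied to the carry bits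
`h*(P⁽ʲ⁾)` and the conjunctions of propagate signals `a(P⁽ʲ⁾)` of the parts. -/
theorem stmt_19 (n l : ℕ) (hl : 1 ≤ l) (sizes : ℕ → ℕ)
    (hpos : ∀ j < l, 1 ≤ sizes j)
    (hsum : ∑ j ∈ Finset.range l, sizes j = n)
    (p g : ℕ → Bool) :
    aop (carryList g p 0 n) =
      aop (carryList
        (fun j => aop (carryList g p (∑ i ∈ Finset.range j, sizes i) (sizes j)))
        (fun j => (List.range (sizes j)).all
          fun i => p ((∑ i' ∈ Finset.range j, sizes i') + i))
        0 l) := by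
  subst hsum
  induction l with
  | zero => omega
  | succ l ih =>
    rcases Nat.eq_or_lt_of_le hl with h | h
    · have : l = 0 := by omega
      subst this
      simp [carryList, aop, List.range_succ]
    · have hl1 : 1 ≤ l := by omega
      have hs : 1 ≤ ∑ j ∈ Finset.range l, sizes j := by
        have : 0 < ∑ j ∈ Finset.range l, sizes j :=
          Finset.sum_pos (fun j hj => hpos j (by simp at hj; omega))
            ⟨0, by simp; omega⟩
        omega
      rw [Finset.sum_range_succ,
        carry_split g p _ hs _ (hpos l (by omega)),
        carryList_succ _ _ 0 l hl1,
        ih hl1 (fun j hj => hpos j (by omega))]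
      simp [aop]
end
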